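/- arXiv:0809.0915 — 4 statements merged into one kernel-verified Lean document; each statement's English description precedes it below -/
import Mathlib

section
/- Let χ: E^r → {-1,+1} be a uniform chirotope of rank r on E = {1,...,n}, and let F_{i-1}, F_i be two d-element ordered tuples differing by a pivot (F_i = F_{i-1} \ {l_i} ∪ {e_i}) which are both facets of the associated matroid polytope. Let τ(Y) = (-1)^k where k transpositions sort the tuple Y, and set σ = τ(F_{i-1}, e_i)·τ(F_i, l_i). Then for all x ∉ F_i and y ∉ F_{i-1}, σ·χ(F_i, x) = χ(F_{i-1}, y). -/
lemma my_snoc_inj {k : ℕ} {f : Fin k → ℕ} {a : ℕ} (hf : Function.Injective f)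
    (ha : a ∉ Set.range f) : Function.Injective (Fin.snoc f a : Fin (k+1) → ℕ) := by
  intro i j hij
  induction i using Fin.lastCases with
  | last =>
    induction j using Fin.lastCases with
    | last => rfl
    | cast j => simp only [Fin.snoc_last, Fin.snoc_castSucc] at hij
                exact absurd ⟨j, hij.symm⟩ ha
  | cast i =>
    induction j using Fin.lastCases with
    | last => simp only [Fin.snoc_last, Fin.snoc_castSucc] at hij
              exact absurd ⟨i, hij⟩ ha
    | cast j => simp only [Fin.snoc_castSucc] at hij
                exact congrArg Fin.castSucc (hf hij)

lemma my_range_snoc {k : ℕ} (f : Fin k → ℕ) (a : ℕ) :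
    Set.range (Fin.snoc f a : Fin (k+1) → ℕ) = insert a (Set.range f) := by
  ext t
  constructor
  · rintro ⟨i, rfl⟩
    induction i using Fin.lastCases with
    | last => simp
    | cast i => simp [Fin.snoc_castSucc]
  · rintro (rfl | ⟨i, rfl⟩)
    · exact ⟨Fin.last k, by simp⟩
    · exact ⟨i.castSucc, by simp⟩


lemma my_sort_sign_chi {m : ℕ} {χ : (Fin (m+2) → ℕ) → ℤ}
    (hperm : ∀ (b : Fin (m+2) → ℕ) (ρ : Equiv.Perm (Fin (m+2))),
      χ (b ∘ ρ) = Equiv.Perm.sign ρ * χ b)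
    {b b' : Fin (m+2) → ℕ} (hb : Function.Injective b) (hb' : Function.Injective b')
    (hr : Set.range b = Set.range b') :
    (Equiv.Perm.sign (Tuple.sort b) : ℤ) * χ b
      = (Equiv.Perm.sign (Tuple.sort b') : ℤ) * χ b' := by
  have m1 : StrictMono (b ∘ Tuple.sort b) :=
    (Tuple.monotone_sort b).strictMono_of_injective (hb.comp (Tuple.sort b).injective)
  have m2 : StrictMono (b' ∘ Tuple.sort b') :=
    (Tuple.monotone_sort b').strictMono_of_injective (hb'.comp (Tuple.sort b').injective)
  have hre : Set.range (b ∘ Tuple.sort b) = Set.range (b' ∘ Tuple.sort b') := by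
    rw [Set.range_comp, Set.range_comp, (Tuple.sort b).surjective.range_eq,
      (Tuple.sort b').surjective.range_eq, Set.image_univ, Set.image_univ, hr]
  have hwf : WellFoundedLT (Fin (m+2)) := inferInstance
  have heq : b ∘ Tuple.sort b = b' ∘ Tuple.sort b' := (m1.range_inj m2).mp hre
  have := hperm b (Tuple.sort b)
  rw [heq, hperm b' (Tuple.sort b')] at this
  linarith



/-- `τ Y` is the sign `(-1)^k` where `k` transpositions are required to sort
the tuple `Y`. -/
noncomputable def tupleSortSign {m : ℕ} (Y : Fin m → ℕ) : ℤ :=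
  Equiv.Perm.sign (Tuple.sort Y)

/-- Append two further entries to an `m`-tuple. -/
def app2 {m : ℕ} (s : Fin m → ℕ) (x y : ℕ) : Fin (m + 2) → ℕ :=
  Fin.snoc (Fin.snoc s x) y

/-- A uniform chirotope of rank `r = m + 2` on `E = {1, …, n}`: an alternating
map to `{-1, +1}` satisfying the Grassmann–Plücker exchange condition. -/
def IsUniformChirotope (n m : ℕ) (χ : (Fin (m + 2) → ℕ) → ℤ) : Prop :=
  (∀ b : Fin (m + 2) → ℕ, (∀ i, b i ∈ Finset.Icc 1 n) → Function.Injective b →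
    χ b = 1 ∨ χ b = -1) ∧
  (∀ (b : Fin (m + 2) → ℕ) (ρ : Equiv.Perm (Fin (m + 2))),
    χ (b ∘ ρ) = Equiv.Perm.sign ρ * χ b) ∧
  (∀ (s : Fin m → ℕ) (x : Fin 4 → ℕ),
    (∀ i, s i ∈ Finset.Icc 1 n) → Function.Injective s →
    (∀ i, x i ∈ Finset.Icc 1 n) → Function.Injective x →
    (∀ i, x i ∉ Set.range s) →
    ({χ (app2 s (x 0) (x 1)) * χ (app2 s (x 2) (x 3)),
      -(χ (app2 s (x 0) (x 2)) * χ (app2 s (x 1) (x 3))),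
      χ (app2 s (x 0) (x 3)) * χ (app2 s (x 1) (x 2))} : Set ℤ) = {-1, 1})

/-- A `(m+1)`-tuple `F` with entries in `E = {1, …, n}` is a facet of the
matroid polytope of `χ` if `χ(F, e)` has the same sign for all `e ∈ E ∖ F`. -/
def IsChirotopeFacet (n m : ℕ) (χ : (Fin (m + 2) → ℕ) → ℤ)
    (b : Fin (m + 1) → ℕ) : Prop :=
  (∀ i, b i ∈ Finset.Icc 1 n) ∧ Function.Injective b ∧
  ∃ s : ℤ, ∀ x ∈ Finset.Icc 1 n, x ∉ Set.range b → χ (Fin.snoc b x) = s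

/-- Let `χ` be a uniform chirotope of rank `d + 1` (here `d = m + 1`) on
`E = {1, …, n}`, and let `F` and `G` be two `d`-element ordered tuples,
both facets, differing by a pivot which exchanges `l ∈ F` for `e ∉ F`.
With `σ = τ(F, e) · τ(G, l)`, for all `x ∉ G` and `y ∉ F` one has
`σ · χ(G, x) = χ(F, y)`. -/
theorem chirotope_pivot_sign (n m : ℕ) (χ : (Fin (m + 2) → ℕ) → ℤ)
    (hχ : IsUniformChirotope n m χ)
    (F G : Fin (m + 1) → ℕ) (l e : ℕ)
    (hF : IsChirotopeFacet n m χ F) (hG : IsChirotopeFacet n m χ G)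
    (hl : l ∈ Set.range F) (he : e ∉ Set.range F) (heE : e ∈ Finset.Icc 1 n)
    (hpivot : Set.range G = insert e (Set.range F \ {l})) :
    ∀ x ∈ Finset.Icc 1 n, x ∉ Set.range G →
    ∀ y ∈ Finset.Icc 1 n, y ∉ Set.range F →
      (tupleSortSign (Fin.snoc F e) * tupleSortSign (Fin.snoc G l)) *
        χ (Fin.snoc G x) = χ (Fin.snoc F y) := by

  intro x hxE hxG y hyE hyF
  obtain ⟨hFE, hFinj, sF, hsF⟩ := hF
  obtain ⟨hGE, hGinj, sG, hsG⟩ := hG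
  have hlF : l ∈ Set.range F := hl
  obtain ⟨i0, hi0⟩ := hlF
  have hlE : l ∈ Finset.Icc 1 n := hi0 ▸ hFE i0
  have hne : e ≠ l := fun h => he (h ▸ (⟨i0, hi0⟩ : l ∈ Set.range F))
  have hlG : l ∉ Set.range G := by
    rw [hpivot]
    rintro (h | ⟨-, h⟩)
    · exact hne h.symm
    · exact h rfl
  have heG : e ∈ Set.range G := by rw [hpivot]; exact Set.mem_insert _ _
  -- facet propagation
  have h1 : χ (Fin.snoc F y) = χ (Fin.snoc F e) := by
    rw [hsF y hyE hyF, hsF e heE he]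
  have h2 : χ (Fin.snoc G x) = χ (Fin.snoc G l) := by
    rw [hsG x hxE hxG, hsG l hlE hlG]
  -- same underlying sets
  have hrange : Set.range (Fin.snoc F e : Fin (m+2) → ℕ)
      = Set.range (Fin.snoc G l : Fin (m+2) → ℕ) := by
    rw [my_range_snoc, my_range_snoc, hpivot]
    have hl' : l ∈ Set.range F := ⟨i0, hi0⟩
    ext t
    simp only [Set.mem_insert_iff, Set.mem_diff, Set.mem_singleton_iff]
    constructor
    · rintro (rfl | ht)
      · exact Or.inr (Or.inl rfl)
      · by_cases h : t = l
        · exact Or.inl h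
        · exact Or.inr (Or.inr ⟨ht, h⟩)
    · rintro (rfl | rfl | ⟨ht, -⟩)
      · exact Or.inr hl'
      · exact Or.inl rfl
      · exact Or.inr ht
  have hinjF : Function.Injective (Fin.snoc F e : Fin (m+2) → ℕ) :=
    my_snoc_inj hFinj he
  have hinjG : Function.Injective (Fin.snoc G l : Fin (m+2) → ℕ) :=
    my_snoc_inj hGinj hlG
  have hkey := my_sort_sign_chi hχ.2.1 hinjF hinjG hrange
  set s1 : ℤ := tupleSortSign (Fin.snoc F e) with hs1
  set s2 : ℤ := tupleSortSign (Fin.snoc G l) with hs2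
  have hs1sq : s1 * s1 = 1 := by
    rw [hs1, tupleSortSign, ← Units.val_mul, Int.units_mul_self, Units.val_one]
  have hs2sq : s2 * s2 = 1 := by
    rw [hs2, tupleSortSign, ← Units.val_mul, Int.units_mul_self, Units.val_one]
  have hkey' : s1 * χ (Fin.snoc F e) = s2 * χ (Fin.snoc G l) := hkey
  rw [h1, h2]
  calc s1 * s2 * χ (Fin.snoc G l) = s1 * (s2 * χ (Fin.snoc G l)) := by ring
    _ = s1 * (s1 * χ (Fin.snoc F e)) := by rw [hkey']
    _ = (s1 * s1) * χ (Fin.snoc F e) := by ring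
    _ = χ (Fin.snoc F e) := by rw [hs1sq, one_mul]
end

section
/- Let χ be an alternating map from (d+1)-tuples of E to {-1,+1}. For a path complex F_1, ..., F_m with pivots e_i = F_i \ F_{i-1}, l_i = F_{i-1} \ F_i, define σ_1 = 1 and σ_i = τ(F_{i-1}, e_i)·τ(F_i, l_i)·σ_{i-1}, where τ(Y) is the sign of the permutation sorting the tuple Y. If every F_i is a facet (χ(F_i, x) constant over x ∉ F_i), then σ_i·χ(F_i, x) is the same value for all i ∈ {1,...,m} and all x ∉ F_i. -/
private lemma snoc_injective {d : ℕ} {f : Fin d → ℕ} (hf : Function.Injective f)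
    {x : ℕ} (hx : x ∉ Set.range f) :
    Function.Injective (Fin.snoc f x : Fin (d + 1) → ℕ) := by
  intro a b hab
  induction a using Fin.lastCases with
  | last =>
    induction b using Fin.lastCases with
    | last => rfl
    | cast b =>
      simp only [Fin.snoc_last, Fin.snoc_castSucc] at hab
      exact absurd ⟨b, hab.symm⟩ hx
  | cast a =>
    induction b using Fin.lastCases with
    | last =>
      simp only [Fin.snoc_last, Fin.snoc_castSucc] at hab
      exact absurd ⟨a, hab⟩ hx
    | cast b =>
      simp only [Fin.snoc_castSucc] at hab
      rw [hf hab]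

private lemma range_snoc' {d : ℕ} (f : Fin d → ℕ) (x : ℕ) :
    Set.range (Fin.snoc f x : Fin (d + 1) → ℕ) = insert x (Set.range f) := by
  ext y
  constructor
  · rintro ⟨i, rfl⟩
    induction i using Fin.lastCases with
    | last => simp
    | cast i => exact Set.mem_insert_iff.mpr (Or.inr ⟨i, by rw [Fin.snoc_castSucc]⟩)
  · rintro (rfl | ⟨i, rfl⟩)
    · exact ⟨Fin.last d, Fin.snoc_last ..⟩
    · exact ⟨i.castSucc, Fin.snoc_castSucc ..⟩

/-- Let `χ` be an alternating map with values in `{-1, +1}` on `(d+1)`-tuples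
from `E = {1, …, n}`, and let `F_1, …, F_m` be a path complex of `d`-sets
(listed as increasing `d`-tuples), with pivots exchanging `l_i` for `e_i`.
Define `σ_1 = 1` and `σ_i = τ(F_{i-1}, e_i) · τ(F_i, l_i) · σ_{i-1}`.
If every `F_i` is a facet (`χ(F_i, x)` constant over `x ∉ F_i`), then
`σ_i · χ(F_i, x)` takes the same value for all `i` and all `x ∉ F_i`. -/
theorem sigma_chi_constant (n d m : ℕ) (hdn : d < n)
    (χ : (Fin (d + 1) → ℕ) → ℤ)
    (hsign : ∀ b : Fin (d + 1) → ℕ, χ b = 1 ∨ χ b = -1)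
    (halt : ∀ (b : Fin (d + 1) → ℕ) (ρ : Equiv.Perm (Fin (d + 1))),
      χ (b ∘ ρ) = Equiv.Perm.sign ρ * χ b)
    (F : Fin (m + 1) → Fin d → ℕ) (l e : Fin m → ℕ)
    (hmono : ∀ j, StrictMono (F j))
    (hE : ∀ j i, F j i ∈ Finset.Icc 1 n)
    (hl : ∀ j : Fin m, l j ∈ Set.range (F j.castSucc))
    (he : ∀ j : Fin m, e j ∉ Set.range (F j.castSucc))
    (hstep : ∀ j : Fin m,
      Set.range (F j.succ) = insert (e j) (Set.range (F j.castSucc) \ {l j}))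
    (hfacet : ∀ j : Fin (m + 1), ∃ s : ℤ,
      ∀ x ∈ Finset.Icc 1 n, x ∉ Set.range (F j) → χ (Fin.snoc (F j) x) = s)
    (σ : Fin (m + 1) → ℤ)
    (hσ0 : σ 0 = 1)
    (hσ : ∀ j : Fin m, σ j.succ =
      tupleSortSign (Fin.snoc (F j.castSucc) (e j)) *
        tupleSortSign (Fin.snoc (F j.succ) (l j)) * σ j.castSucc) :
    ∃ c : ℤ, ∀ (j : Fin (m + 1)) (x : ℕ), x ∈ Finset.Icc 1 n →
      x ∉ Set.range (F j) → σ j * χ (Fin.snoc (F j) x) = c := by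
  classical
  choose s hs using hfacet
  refine ⟨σ 0 * s 0, ?_⟩
  have key : ∀ j : Fin (m + 1), σ j * s j = σ 0 * s 0 := by
    intro j
    induction j using Fin.induction with
    | zero => rfl
    | succ j ih =>
      -- basic facts about pivots
      have henE : e j ∈ Finset.Icc 1 n := by
        have : e j ∈ Set.range (F j.succ) := by
          rw [hstep j]; exact Set.mem_insert _ _
        obtain ⟨i, hi⟩ := this
        rw [← hi]; exact hE _ _
      have hlnE : l j ∈ Finset.Icc 1 n := by
        obtain ⟨i, hi⟩ := hl j
        rw [← hi]; exact hE _ _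
      have hne : e j ≠ l j := by
        rintro h
        exact he j (h ▸ hl j)
      have hlnot : l j ∉ Set.range (F j.succ) := by
        rw [hstep j]
        rintro (h | ⟨-, h⟩)
        · exact hne h.symm
        · exact h rfl
      -- the two snoc tuples
      set Y₁ : Fin (d + 1) → ℕ := Fin.snoc (F j.castSucc) (e j) with hY₁
      set Y₂ : Fin (d + 1) → ℕ := Fin.snoc (F j.succ) (l j) with hY₂
      have hχ₁ : χ Y₁ = s j.castSucc := hs j.castSucc _ henE (he j)
      have hχ₂ : χ Y₂ = s j.succ := hs j.succ _ hlnE hlnot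
      have hinj₁ : Function.Injective Y₁ := snoc_injective (hmono _).injective (he j)
      have hinj₂ : Function.Injective Y₂ := snoc_injective (hmono _).injective hlnot
      have hrange : Set.range Y₁ = Set.range Y₂ := by
        rw [hY₁, hY₂, range_snoc', range_snoc', hstep j]
        rw [Set.insert_comm, Set.insert_diff_singleton]
        congr 1
        exact (Set.insert_eq_self.mpr (hl j)).symm
      -- sorted tuples coincide
      set ρ₁ := Tuple.sort Y₁
      set ρ₂ := Tuple.sort Y₂
      have hsorted : Y₁ ∘ ρ₁ = Y₂ ∘ ρ₂ := by
        have h₁ : StrictMono (Y₁ ∘ ρ₁) :=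
          (Tuple.monotone_sort Y₁).strictMono_of_injective
            (hinj₁.comp ρ₁.injective)
        have h₂ : StrictMono (Y₂ ∘ ρ₂) :=
          (Tuple.monotone_sort Y₂).strictMono_of_injective
            (hinj₂.comp ρ₂.injective)
        have inst : WellFoundedLT (Fin (d + 1)) := inferInstance
        refine (StrictMono.range_inj h₁ h₂).mp ?_
        rw [ρ₁.surjective.range_comp, ρ₂.surjective.range_comp, hrange]
      -- sign bookkeeping
      set t₁ : ℤ := tupleSortSign Y₁ with ht₁
      set t₂ : ℤ := tupleSortSign Y₂ with ht₂
      have ht₁sq : t₁ * t₁ = 1 := by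
        rw [ht₁, tupleSortSign, ← Units.val_mul, ← sq, Int.units_sq, Units.val_one]
      have ht₂sq : t₂ * t₂ = 1 := by
        rw [ht₂, tupleSortSign, ← Units.val_mul, ← sq, Int.units_sq, Units.val_one]
      have halt₁ : χ (Y₁ ∘ ρ₁) = t₁ * χ Y₁ := halt Y₁ ρ₁
      have halt₂ : χ (Y₂ ∘ ρ₂) = t₂ * χ Y₂ := halt Y₂ ρ₂
      have hχrel : χ Y₂ = t₂ * t₁ * χ Y₁ := by
        have : t₂ * χ (Y₂ ∘ ρ₂) = t₂ * t₂ * χ Y₂ := by rw [halt₂]; ring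
        rw [ht₂sq, one_mul] at this
        rw [← this, ← hsorted, halt₁]; ring
      calc σ j.succ * s j.succ
          = t₁ * t₂ * σ j.castSucc * χ Y₂ := by rw [hσ j, hχ₂]
        _ = (t₁ * t₁) * (t₂ * t₂) * (σ j.castSucc * χ Y₁) := by rw [hχrel]; ring
        _ = σ j.castSucc * χ Y₁ := by rw [ht₁sq, ht₂sq]; ring
        _ = σ 0 * s 0 := by rw [hχ₁]; exact ih
  intro j x hx hxr
  rw [hs j x hx hxr, key j]
end

section
/- Let P|L|S be the pivot sequence of a non-revisiting path complex, partitioned into prefix P, loop L, and suffix S, and form a new complex by identifying the vertex leaving at the first pivot of L with the vertex entering at the last pivot of L. If the resulting complex is an end-disjoint path complex, then the loop L contains at least three distinct symbols (column indices). -/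
/-- Take a non-revisiting path complex, given as rows `T 0, …, T N` of a
`d`-column table, where step `j` pivots in column `p j`, replacing the old
occupant by the entering vertex `e j`.  Its pivot sequence is partitioned as
`P|L|S` where the loop `L` consists of the pivots with indices in `[a, b]`.
Identify the vertex leaving at the first pivot of `L` (namely `T a (p a)`)
with the vertex entering at the last pivot of `L` (namely `e b`), giving the
table `T'`.  If the resulting complex is an end-disjoint path complex (rows
are `d`-sets, non-consecutive facets share no ridge, first and last facets
are vertex-disjoint), then the loop `L` contains at least three distinct
column indices. -/
theorem loop_has_three_symbols (d N : ℕ)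
    (T : Fin (N + 1) → Fin d → ℕ) (p : Fin N → Fin d) (e : Fin N → ℕ)
    (hrow : ∀ j, Function.Injective (T j))
    (hstep : ∀ j : Fin N, T j.succ = Function.update (T j.castSucc) (p j) (e j))
    (hnew : ∀ j : Fin N, e j ∉ Set.range (T j.castSucc))
    (hinj : Function.Injective e)
    (hnonrev : ∀ j : Fin N, e j ∉ Set.range (T 0))
    (a b : Fin N) (hab : a ≤ b)
    (T' : Fin (N + 1) → Fin d → ℕ)
    (hT' : T' = fun j i =>
      if T j i = e b then T a.castSucc (p a) else T j i)
    (hrow' : ∀ j, Function.Injective (T' j))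
    (hpath' : ∀ j k : Fin (N + 1), j.val + 1 < k.val →
      ((Finset.univ.image (T' j)) ∩ (Finset.univ.image (T' k))).card + 2 ≤ d)
    (hdisj : Finset.univ.image (T' 0) ∩ Finset.univ.image (T' (Fin.last N)) = ∅) :
    3 ≤ ((Finset.Icc a b).image p).card := by
  by_contra hcon
  push_neg at hcon
  have hcard2 : ((Finset.Icc a b).image p).card ≤ 2 := by omega
  have hd : 0 < d := (p a).pos
  have hab' : a.val ≤ b.val := hab
  have Feq : ∀ (m : ℕ) (h : m < N + 1) (k : Fin (N + 1)), m = k.val → T ⟨m, h⟩ = T k :=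
    fun m h k hk => congrArg T (Fin.ext hk)
  have hstep2 : ∀ (jj : Fin N) (i : Fin d),
      T jj.succ i = if i = p jj then e jj else T jj.castSucc i := by
    intro jj i
    rw [hstep jj, Function.update_apply]
  have hstep' : ∀ (m : ℕ) (h : m < N) (i : Fin d),
      T ⟨m + 1, by omega⟩ i
        = if i = p ⟨m, h⟩ then e ⟨m, h⟩ else T ⟨m, by omega⟩ i := by
    intro m h i
    exact hstep2 ⟨m, h⟩ i
  have lem1 : ∀ (jj : Fin N) (m : ℕ), m ≤ jj.val → ∀ (hm' : m < N + 1) (i : Fin d),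
      T ⟨m, hm'⟩ i ≠ e jj := by
    intro jj m
    induction m with
    | zero =>
      intro _ hm' i h
      exact hnonrev jj ⟨i, by rw [← Feq 0 hm' 0 rfl]; exact h⟩
    | succ m ih =>
      intro hm hm' i h
      have hmN : m < N := by omega
      rw [hstep' m hmN i] at h
      by_cases hi : i = p ⟨m, hmN⟩
      · rw [if_pos hi] at h
        have h2 : (⟨m, hmN⟩ : Fin N) = jj := hinj h
        have : m = jj.val := congrArg Fin.val h2
        omega
      · rw [if_neg hi] at h
        exact ih (by omega) (by omega) i h
  have lem1' : ∀ (k : Fin (N + 1)), k.val ≤ b.val → ∀ i, T k i ≠ e b := by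
    intro k hk i
    rw [← Feq k.val k.isLt k rfl]
    exact lem1 b k.val hk k.isLt i
  have hT'val : ∀ (k : Fin (N + 1)) (i : Fin d),
      T' k i = if T k i = e b then T a.castSucc (p a) else T k i := by
    rw [hT']; intro k i; rfl
  have pmem : ∀ (m : ℕ) (hm : m < N), a.val ≤ m → m ≤ b.val →
      p ⟨m, hm⟩ ∈ (Finset.Icc a b).image p := by
    intro m hm h1 h2
    exact Finset.mem_image_of_mem p (Finset.mem_Icc.mpr
      ⟨by rw [Fin.le_def]; exact h1, by rw [Fin.le_def]; exact h2⟩)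
  have lem2 : ∀ (i : Fin d), i ∉ (Finset.Icc a b).image p →
      ∀ (m : ℕ) (hm : a.val ≤ m), m ≤ b.val + 1 → ∀ (hm' : m < N + 1),
      T ⟨m, hm'⟩ i = T a.castSucc i := by
    intro i hi m hm
    induction m, hm using Nat.le_induction with
    | base =>
      intro _ hm'
      rw [Feq a.val hm' a.castSucc (by simp)]
    | succ m hm ih =>
      intro hm2 hm'
      have hmN : m < N := by omega
      have hip : i ≠ p ⟨m, hmN⟩ := by
        intro hip
        exact hi (by rw [hip]; exact pmem m hmN hm (by omega))
      rw [hstep' m hmN i, if_neg hip, ih (by omega) (by omega)]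
  have main : ∀ (j k : Fin (N + 1)), j.val + 1 < k.val →
      ∀ U : Finset (Fin d), d ≤ U.card + 1 →
      (∀ i ∈ U, T' j i ∈ Finset.univ.image (T' k)) → False := by
    intro j k hjk U hU hcom
    have h1 : U.image (T' j) ⊆ Finset.univ.image (T' j) ∩ Finset.univ.image (T' k) := by
      intro x hx
      rcases Finset.mem_image.mp hx with ⟨i, hi, rfl⟩
      exact Finset.mem_inter.mpr
        ⟨Finset.mem_image_of_mem _ (Finset.mem_univ i), hcom i hi⟩
    have h2 : (U.image (T' j)).card = U.card := Finset.card_image_of_injective U (hrow' j)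
    have h3 := Finset.card_le_card h1
    have h4 := hpath' j k hjk
    omega
  rcases lt_or_eq_of_le hab with hlt | heq
  · -- a < b
    have hltv : a.val < b.val := hlt
    have hSd : ((Finset.Icc a b).image p).card ≤ d := by
      have := Finset.card_le_univ ((Finset.Icc a b).image p)
      simpa using this
    have hpaS : p a ∈ (Finset.Icc a b).image p :=
      Finset.mem_image_of_mem p (Finset.mem_Icc.mpr ⟨le_refl a, hab⟩)
    refine main a.castSucc b.succ
      (by simp only [Fin.coe_castSucc, Fin.val_succ]; omega)
      (insert (p a) ((Finset.Icc a b).image p)ᶜ) ?_ ?_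
    · rw [Finset.card_insert_of_notMem (by simp [hpaS]), Finset.card_compl]
      simp only [Fintype.card_fin]
      omega
    · intro i hi
      rcases Finset.mem_insert.mp hi with rfl | hic
      · -- i = p a
        have hTj : T' a.castSucc (p a) = T a.castSucc (p a) := by
          rw [hT'val]
          split <;> rfl
        rw [hTj]
        refine Finset.mem_image.mpr ⟨p b, Finset.mem_univ _, ?_⟩
        have hTb : T b.succ (p b) = e b := by
          rw [hstep2 b (p b), if_pos rfl]
        rw [hT'val, hTb, if_pos rfl]
      · -- i not in loop columns
        have hic' : i ∉ (Finset.Icc a b).image p := Finset.mem_compl.mp hic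
        have h1 : T a.castSucc i ≠ e b :=
          lem1' a.castSucc (by simpa using hab') i
        have h2 : T b.succ i = T a.castSucc i := by
          rw [← Feq (b.val + 1) (by omega) b.succ (by simp)]
          exact lem2 i hic' (b.val + 1) (by omega) (le_refl _) (by omega)
        refine Finset.mem_image.mpr ⟨i, Finset.mem_univ _, ?_⟩
        rw [hT'val, hT'val, h2]
  · -- a = b
    subst heq
    have hTa1 : ∀ i, T' a.succ i = T' a.castSucc i := by
      intro i
      rw [hT'val, hT'val, hstep2 a i]
      by_cases hi : i = p a
      · rw [if_pos hi, if_pos rfl, hi, if_neg (lem1' a.castSucc (by simp) (p a))]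
      · rw [if_neg hi]
    by_cases h2N : a.val + 1 < N
    · refine main a.castSucc ⟨a.val + 1 + 1, by omega⟩
        (by simp only [Fin.coe_castSucc]; omega)
        ({p ⟨a.val + 1, h2N⟩}ᶜ) ?_ ?_
      · rw [Finset.card_compl]
        simp only [Finset.card_singleton, Fintype.card_fin]
        omega
      · intro i hi
        have hip : i ≠ p ⟨a.val + 1, h2N⟩ := by simpa using hi
        refine Finset.mem_image.mpr ⟨i, Finset.mem_univ _, ?_⟩
        have hk : T (⟨a.val + 1 + 1, by omega⟩ : Fin (N + 1)) i = T a.succ i := by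
          rw [hstep' (a.val + 1) h2N i, if_neg hip]
          exact congrFun (Feq (a.val + 1) (by omega) a.succ (by simp)) i
        calc T' (⟨a.val + 1 + 1, by omega⟩ : Fin (N + 1)) i
            = T' a.succ i := by rw [hT'val, hT'val, hk]
          _ = T' a.castSucc i := hTa1 i
    · by_cases h0a : 0 < a.val
      · have haN : a.val < N := a.isLt
        have ha1N : a.val - 1 < N := by omega
        refine main ⟨a.val - 1, by omega⟩ a.succ
          (by simp only [Fin.val_succ]; omega)
          ({p ⟨a.val - 1, ha1N⟩}ᶜ) ?_ ?_
        · rw [Finset.card_compl]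
          simp only [Finset.card_singleton, Fintype.card_fin]
          omega
        · intro i hi
          have hip : i ≠ p ⟨a.val - 1, ha1N⟩ := by simpa using hi
          refine Finset.mem_image.mpr ⟨i, Finset.mem_univ _, ?_⟩
          have h1 : T a.castSucc i = T (⟨a.val - 1, by omega⟩ : Fin (N + 1)) i := by
            have hh := hstep' (a.val - 1) ha1N i
            rw [if_neg hip] at hh
            rw [← Feq (a.val - 1 + 1) (by omega) a.castSucc (by simp; omega)]
            exact hh
          calc T' a.succ i = T' a.castSucc i := hTa1 i
            _ = T' (⟨a.val - 1, by omega⟩ : Fin (N + 1)) i := by rw [hT'val, hT'val, h1]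
      · have haN : a.val < N := a.isLt
        have hN1 : N = 1 := by omega
        have hav : a.val = 0 := by omega
        have h1 : (Fin.last N) = a.succ := Fin.ext (by simp [Fin.val_last, Fin.val_succ]; omega)
        have h2 : (0 : Fin (N + 1)) = a.castSucc := Fin.ext (by simp; omega)
        have h3 : T' (Fin.last N) = T' 0 := by
          rw [h1, h2]; funext i; exact hTa1 i
        rw [h3, Finset.inter_self] at hdisj
        have h4 : T' 0 ⟨0, hd⟩ ∈ Finset.univ.image (T' 0) :=
          Finset.mem_image_of_mem _ (Finset.mem_univ _)
        rw [hdisj] at h4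
        exact absurd h4 (Finset.notMem_empty _)
end

section
/- Let P|L|S be the pivot sequence of a non-revisiting path complex, with the first and last pivots of the loop L identified to form a single-revisit complex. If the resulting complex is end-disjoint, then either the symbol at the first position of L appears in the prefix P, or the symbol at the last position of L appears in the suffix S. -/
/-- Take a non-revisiting path complex, given as rows `T 0, …, T N` of a
`d`-column table, where step `j` pivots in column `p j`, replacing the old
occupant by the entering vertex `e j`.  Its pivot sequence is partitioned as
`P|L|S` where the loop `L` consists of the pivots with indices in `[a, b]`.
Identify the vertex leaving at the first pivot of `L` (namely `T a (p a)`)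
with the vertex entering at the last pivot of `L` (namely `e b`), giving the
table `T'`.  If the resulting complex is an end-disjoint path complex, then
either the column index of the first pivot of `L` appears in the prefix `P`,
or the column index of the last pivot of `L` appears in the suffix `S`. -/
theorem loop_symbol_in_prefix_or_suffix (d N : ℕ)
    (T : Fin (N + 1) → Fin d → ℕ) (p : Fin N → Fin d) (e : Fin N → ℕ)
    (hrow : ∀ j, Function.Injective (T j))
    (hstep : ∀ j : Fin N, T j.succ = Function.update (T j.castSucc) (p j) (e j))
    (hnew : ∀ j : Fin N, e j ∉ Set.range (T j.castSucc))
    (hinj : Function.Injective e)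
    (hnonrev : ∀ j : Fin N, e j ∉ Set.range (T 0))
    (a b : Fin N) (hab : a ≤ b)
    (T' : Fin (N + 1) → Fin d → ℕ)
    (hT' : T' = fun j i =>
      if T j i = e b then T a.castSucc (p a) else T j i)
    (hrow' : ∀ j, Function.Injective (T' j))
    (hpath' : ∀ j k : Fin (N + 1), j.val + 1 < k.val →
      ((Finset.univ.image (T' j)) ∩ (Finset.univ.image (T' k))).card + 2 ≤ d)
    (hdisj : Finset.univ.image (T' 0) ∩ Finset.univ.image (T' (Fin.last N)) = ∅) :
    (∃ j : Fin N, j < a ∧ p j = p a) ∨ (∃ j : Fin N, b < j ∧ p j = p b) := by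
  by_contra hcon
  push_neg at hcon
  obtain ⟨h1, h2⟩ := hcon
  -- Column `p a` is untouched before step `a`.
  have hA : ∀ m : ℕ, (hm : m ≤ a.val) → T ⟨m, by omega⟩ (p a) = T 0 (p a) := by
    intro m
    induction m with
    | zero => intro _; rfl
    | succ n ih =>
      intro hm
      have hlt : n < N := by omega
      have hj : (⟨n + 1, by omega⟩ : Fin (N + 1)) = (⟨n, hlt⟩ : Fin N).succ := rfl
      rw [hj, hstep ⟨n, hlt⟩, Function.update_of_ne]
      · exact ih (by omega)
      · intro h
        exact h1 ⟨n, hlt⟩ (by exact Fin.mk_lt_mk.mpr (by omega)) h.symm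
  -- Column `p b` holds `e b` after step `b`.
  have hB : ∀ m : ℕ, b.val < m → (hm : m ≤ N) → T ⟨m, by omega⟩ (p b) = e b := by
    intro m
    induction m with
    | zero => intro h _; omega
    | succ n ih =>
      intro h hm
      by_cases hn : n = b.val
      · have hj : (⟨n + 1, by omega⟩ : Fin (N + 1)) = b.succ := by
          apply Fin.ext; simp [hn]
        rw [hj, hstep b, Function.update_self]
      · have hlt : n < N := by omega
        have hj : (⟨n + 1, by omega⟩ : Fin (N + 1)) = (⟨n, hlt⟩ : Fin N).succ := rfl
        rw [hj, hstep ⟨n, hlt⟩, Function.update_of_ne]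
        · exact ih (by omega) (by omega)
        · intro hpe
          exact h2 ⟨n, hlt⟩ (by exact Fin.mk_lt_mk.mpr (by omega)) hpe.symm
  have hTa : T a.castSucc (p a) = T 0 (p a) := hA a.val le_rfl
  have hTlast : T (Fin.last N) (p b) = e b := hB N b.isLt le_rfl
  have h0 : T' 0 (p a) = T 0 (p a) := by
    rw [hT']
    simp only
    rw [if_neg]
    intro h
    exact hnonrev b ⟨p a, h⟩
  have hl : T' (Fin.last N) (p b) = T 0 (p a) := by
    rw [hT']
    simp only
    rw [if_pos hTlast, hTa]
  have hmem : T 0 (p a) ∈ Finset.univ.image (T' 0) ∩ Finset.univ.image (T' (Fin.last N)) := by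
    rw [Finset.mem_inter]
    exact ⟨Finset.mem_image.mpr ⟨p a, Finset.mem_univ _, h0⟩,
      Finset.mem_image.mpr ⟨p b, Finset.mem_univ _, hl⟩⟩
  rw [hdisj] at hmem
  exact absurd hmem (Finset.notMem_empty _)
end
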